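/- Let P₀ be a probability measure on ℝ^d and U, V probability measures on ℝ^d whose characteristic functions are strictly positive real numbers at every ω ∈ ℝ^d. Let μ = ½(P₀⋆U) + ½(P₀⋆V) be the equal mixture. Then for every ω ∈ ℝ^d, φ_μ(ω) = φ_{P₀}(ω) · (½φ_U(ω) + ½φ_V(ω)), the factor ½φ_U(ω) + ½φ_V(ω) is a strictly positive real number, and hence for every ω with φ_{P₀}(ω) ≠ 0 the phase of μ equals the phase of P₀: φ_μ(ω)/|φ_μ(ω)| = φ_{P₀}(ω)/|φ_{P₀}(ω)|. -/

import Mathlib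

open MeasureTheory RealInnerProductSpace ENNReal

/-- The characteristic function of a measure `P` on `ℝ^d`. -/
noncomputable def charFun' {d : ℕ} (P : Measure (EuclideanSpace ℝ (Fin d)))
    (ω : EuclideanSpace ℝ (Fin d)) : ℂ :=
  ∫ x, Complex.exp (Complex.I * (⟪ω, x⟫ : ℝ)) ∂P

/-- The phase function of a measure `P` on `ℝ^d`. -/
noncomputable def phase {d : ℕ} (P : Measure (EuclideanSpace ℝ (Fin d)))
    (ω : EuclideanSpace ℝ (Fin d)) : ℂ :=
  charFun' P ω / ((‖charFun' P ω‖ : ℝ) : ℂ)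

/-! The characteristic function is multiplicative under convolution and affine in the measure,
so `φ_μ = φ_{P₀}·(½φ_U + ½φ_V)`. The second factor is a positive real number, and multiplying
`z` by a positive real does not change `z / ‖z‖`. -/

namespace MeasureTheory

variable {E : Type*} [NormedAddCommGroup E] [InnerProductSpace ℝ E] {mE : MeasurableSpace E}
  [OpensMeasurableSpace E]

lemma charFun_add_measure (μ ν : Measure E) [IsFiniteMeasure μ] [IsFiniteMeasure ν] (t : E) :
    charFun (μ + ν) t = charFun μ t + charFun ν t := by
  simp only [charFun_eq_integral_innerProbChar]
  exact integral_add_measure ((BoundedContinuousFunction.innerProbChar t).integrable μ)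
    ((BoundedContinuousFunction.innerProbChar t).integrable ν)

omit [OpensMeasurableSpace E] in
lemma charFun_smul_measure (c : ℝ≥0∞) (μ : Measure E) (t : E) :
    charFun (c • μ) t = c.toReal * charFun μ t := by
  rw [charFun_apply, charFun_apply, integral_smul_measure, Complex.real_smul]

lemma charFun_smul_add_smul (μ ν : Measure E) [IsFiniteMeasure μ] [IsFiniteMeasure ν]
    {a b : ℝ≥0∞} (ha : a ≠ ∞) (hb : b ≠ ∞) (t : E) :
    charFun (a • μ + b • ν) t = a.toReal * charFun μ t + b.toReal * charFun ν t := by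
  have := μ.smul_finite ha
  have := ν.smul_finite hb
  rw [charFun_add_measure, charFun_smul_measure, charFun_smul_measure]

end MeasureTheory

lemma charFun'_eq_charFun {d : ℕ} (P : Measure (EuclideanSpace ℝ (Fin d))) :
    charFun' P = charFun P := by
  ext ω
  simp only [charFun', charFun_apply, real_inner_comm ω, mul_comm Complex.I]

lemma Complex.mul_ofReal_div_norm (z : ℂ) {r : ℝ} (hr : 0 < r) :
    z * r / (‖z * r‖ : ℂ) = z / (‖z‖ : ℂ) := by
  rw [norm_mul, Complex.norm_real, Real.norm_of_nonneg hr.le, Complex.ofReal_mul,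
    mul_div_mul_right _ _ (Complex.ofReal_ne_zero.mpr hr.ne')]

lemma phase_eq_of_charFun'_eq_mul_pos {d : ℕ} {μ P : Measure (EuclideanSpace ℝ (Fin d))}
    {ω : EuclideanSpace ℝ (Fin d)} {r : ℝ} (hr : 0 < r) (h : charFun' μ ω = charFun' P ω * r) :
    phase μ ω = phase P ω := by
  rw [phase, phase, h, Complex.mul_ofReal_div_norm _ hr]

/-- For the equal mixture `μ = ½(P₀⋆U) + ½(P₀⋆V)` with `U`, `V` SPD components:
`φ_μ = φ_{P₀}·(½φ_U + ½φ_V)`, the factor `½φ_U + ½φ_V` is a strictly positive real number,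
and wherever `φ_{P₀} ≠ 0` the phase of `μ` equals the phase of `P₀`. -/
theorem stmt_13 {d : ℕ} (P₀ U V : Measure (EuclideanSpace ℝ (Fin d)))
    [IsProbabilityMeasure P₀] [IsProbabilityMeasure U] [IsProbabilityMeasure V]
    (hU : ∀ ω : EuclideanSpace ℝ (Fin d), ∃ r : ℝ, 0 < r ∧ charFun' U ω = (r : ℂ))
    (hV : ∀ ω : EuclideanSpace ℝ (Fin d), ∃ r : ℝ, 0 < r ∧ charFun' V ω = (r : ℂ))
    (μ : Measure (EuclideanSpace ℝ (Fin d)))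
    (hμ : μ = (1/2 : ℝ≥0∞) • (P₀.conv U) + (1/2 : ℝ≥0∞) • (P₀.conv V)) :
    ∀ ω : EuclideanSpace ℝ (Fin d),
      charFun' μ ω = charFun' P₀ ω * ((1/2 : ℂ) * charFun' U ω + (1/2 : ℂ) * charFun' V ω) ∧
      (∃ r : ℝ, 0 < r ∧ (1/2 : ℂ) * charFun' U ω + (1/2 : ℂ) * charFun' V ω = (r : ℂ)) ∧
      (charFun' P₀ ω ≠ 0 → phase μ ω = phase P₀ ω) := by
  intro ω
  have hmix : charFun' μ ω =
      charFun' P₀ ω * ((1/2 : ℂ) * charFun' U ω + (1/2 : ℂ) * charFun' V ω) := by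
    simp only [charFun'_eq_charFun]
    rw [hμ, charFun_smul_add_smul _ _ (by norm_num) (by norm_num), charFun_conv, charFun_conv]
    norm_num
    ring
  obtain ⟨rU, hrU, hUω⟩ := hU ω
  obtain ⟨rV, hrV, hVω⟩ := hV ω
  have hfactor : (1/2 : ℂ) * charFun' U ω + (1/2 : ℂ) * charFun' V ω =
      ((rU / 2 + rV / 2 : ℝ) : ℂ) := by
    rw [hUω, hVω]; push_cast; ring
  have hpos : 0 < rU / 2 + rV / 2 := by positivity
  exact ⟨hmix, ⟨_, hpos, hfactor⟩,
    fun _ ↦ phase_eq_of_charFun'_eq_mul_pos hpos (hfactor ▸ hmix)⟩
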